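/- arXiv:1306.0943 — 2 statements merged into one kernel-verified Lean document; each statement's English description precedes it below -/
import Mathlib

section
/- For every n ≥ 4 and every set A of n positive integers, the number of divisors of A is at most 2^(n-1). Consequently, for n ≥ 4 the maximum number of divisors over all sets of n positive integers equals 2^(n-1). -/
/-!
Pair every subset `B` of `A` with its complement `A \ B`. A divisor `B ≠ A` has sum at most half
of `S = ∑ A`, so a complementary pair contains two divisors only when both halves have sum `S / 2`.
Among the three smallest of any four elements there is an `x` with `2 x < S` such that `S / 2 - x` is
not the sum of a divisor. Adding `x` to the half of a half-sum pair that misses it gives a pair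
without divisors (its sums are `S / 2 + x` and `S / 2 - x`), and this sends the divisors
injectively into the `2 ^ (n - 1)` subsets containing `x`.

The bound is attained by `{1, …, n - 1, t! - t}` with `t = 1 + ⋯ + (n - 1)`: the nonempty subsets
of `{1, …, n - 1}` have sums at most `t`, which divide `t!`, and a divisor containing `t! - t`
has sum above `t! / 2`, so it is the whole set.
-/

open Finset
open scoped Nat

def sumDivisors (A : Finset ℕ) : Finset (Finset ℕ) :=
  A.powerset.filter fun B => B.Nonempty ∧ B.sum id ∣ A.sum id

lemma mem_sumDivisors {A B : Finset ℕ} :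
    B ∈ sumDivisors A ↔ B ⊆ A ∧ B.Nonempty ∧ B.sum id ∣ A.sum id := by
  rw [sumDivisors, mem_filter, mem_powerset]

lemma mul_add_one_le_of_dvd {d m S : ℕ} (hd : d ∣ S) (h : d * m < S) : d * (m + 1) ≤ S :=
  Nat.le_of_lt_add_of_dvd (by rw [mul_add_one]; omega) (dvd_mul_right d _) hd

lemma sum_id_lt_of_ssubset {A B : Finset ℕ} (hpos : ∀ a ∈ A, 0 < a) (h : B ⊂ A) :
    B.sum id < A.sum id := by
  obtain ⟨i, hiA, hiB⟩ := exists_of_ssubset h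
  exact sum_lt_sum_of_subset h.subset hiA hiB (hpos i hiA) fun _ _ _ => Nat.zero_le _

lemma eq_of_mem_sumDivisors_of_lt_two_mul {A B : Finset ℕ} (hpos : ∀ a ∈ A, 0 < a)
    (hB : B ∈ sumDivisors A) (h : A.sum id < 2 * B.sum id) : B = A := by
  obtain ⟨hBA, -, hdvd⟩ := mem_sumDivisors.1 hB
  by_contra hne
  have hlt := sum_id_lt_of_ssubset hpos (ssubset_of_subset_of_ne hBA hne)
  have := mul_add_one_le_of_dvd hdvd (m := 1) (by omega)
  omega

lemma sum_id_pos_of_mem_sumDivisors {A B : Finset ℕ} (hpos : ∀ a ∈ A, 0 < a)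
    (hB : B ∈ sumDivisors A) : 0 < B.sum id := by
  obtain ⟨hBA, hne, -⟩ := mem_sumDivisors.1 hB
  exact sum_pos (fun i hi => hpos i (hBA hi)) hne

section UpperBound

variable {A B B₁ B₂ : Finset ℕ} {x : ℕ}

/-- The member containing `x` of the complementary pair `{B, A \ B}`, except that a half-sum `B`
missing `x` is sent to `insert x B` instead. -/
def pairRep (A : Finset ℕ) (x : ℕ) (B : Finset ℕ) : Finset ℕ :=
  if x ∈ B then B else if 2 * B.sum id = A.sum id then insert x B else A \ B

lemma pairRep_subset (hx : x ∈ A) (hB : B ⊆ A) : pairRep A x B ⊆ A := by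
  unfold pairRep
  split_ifs
  exacts [hB, insert_subset hx hB, sdiff_subset]

lemma mem_pairRep (hx : x ∈ A) : x ∈ pairRep A x B := by
  unfold pairRep
  split_ifs with h₁
  exacts [h₁, mem_insert_self x B, mem_sdiff.2 ⟨hx, h₁⟩]

lemma pairRep_ne_of_mem_of_notMem (hpos : ∀ a ∈ A, 0 < a) (hx : x ∈ A)
    (hx2 : 2 * x < A.sum id) (hB₁ : B₁ ∈ sumDivisors A) (hB₂ : B₂ ∈ sumDivisors A)
    (h₁ : x ∈ B₁) (h₂ : x ∉ B₂) : pairRep A x B₁ ≠ pairRep A x B₂ := by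
  have hB₂A := (mem_sumDivisors.1 hB₂).1
  have hB₂0 := sum_id_pos_of_mem_sumDivisors hpos hB₂
  have hx0 := hpos x hx
  intro heq
  simp only [pairRep, if_pos h₁, if_neg h₂] at heq
  split_ifs at heq with hhalf
  · have hsum : B₁.sum id = x + B₂.sum id := by rw [heq, sum_insert h₂, id]
    rw [eq_of_mem_sumDivisors_of_lt_two_mul hpos hB₁ (by omega)] at hsum
    omega
  · have hsum : B₁.sum id + B₂.sum id = A.sum id := by rw [heq]; exact sum_sdiff hB₂A
    have hB₂ne : B₂ ≠ A := fun h => h₂ (h ▸ hx)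
    have h2B₂ : 2 * B₂.sum id ≤ A.sum id :=
      not_lt.1 fun h => hB₂ne (eq_of_mem_sumDivisors_of_lt_two_mul hpos hB₂ h)
    rw [eq_of_mem_sumDivisors_of_lt_two_mul hpos hB₁ (by omega)] at hsum
    omega

lemma pairRep_ne_of_two_mul_eq (hxS : ∀ d, d ∣ A.sum id → 2 * (d + x) ≠ A.sum id)
    (hB₂ : B₂ ∈ sumDivisors A) (h₁ : x ∉ B₁) (h₂ : x ∉ B₂)
    (hhalf₁ : 2 * B₁.sum id = A.sum id) (hhalf₂ : 2 * B₂.sum id ≠ A.sum id) :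
    pairRep A x B₁ ≠ pairRep A x B₂ := by
  obtain ⟨hB₂A, -, hdvd⟩ := mem_sumDivisors.1 hB₂
  intro heq
  simp only [pairRep, if_neg h₁, if_neg h₂, if_pos hhalf₁, if_neg hhalf₂] at heq
  have hsum : x + B₁.sum id + B₂.sum id = A.sum id := by
    rw [← sum_sdiff hB₂A, ← heq, sum_insert h₁, id]
  exact hxS _ hdvd (by omega)

lemma pairRep_injOn (hpos : ∀ a ∈ A, 0 < a) (hx : x ∈ A) (hx2 : 2 * x < A.sum id)
    (hxS : ∀ d, d ∣ A.sum id → 2 * (d + x) ≠ A.sum id) :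
    Set.InjOn (pairRep A x) (sumDivisors A) := by
  intro B₁ hB₁ B₂ hB₂ heq
  have hB₁A := (mem_sumDivisors.1 hB₁).1
  have hB₂A := (mem_sumDivisors.1 hB₂).1
  by_cases h₁ : x ∈ B₁ <;> by_cases h₂ : x ∈ B₂
  · simpa only [pairRep, if_pos h₁, if_pos h₂] using heq
  · exact absurd heq (pairRep_ne_of_mem_of_notMem hpos hx hx2 hB₁ hB₂ h₁ h₂)
  · exact absurd heq.symm (pairRep_ne_of_mem_of_notMem hpos hx hx2 hB₂ hB₁ h₂ h₁)
  by_cases hhalf₁ : 2 * B₁.sum id = A.sum id <;> by_cases hhalf₂ : 2 * B₂.sum id = A.sum id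
  · simp only [pairRep, if_neg h₁, if_neg h₂, if_pos hhalf₁, if_pos hhalf₂] at heq
    simpa only [erase_insert h₁, erase_insert h₂] using congrArg (·.erase x) heq
  · exact absurd heq (pairRep_ne_of_two_mul_eq hxS hB₂ h₁ h₂ hhalf₁ hhalf₂)
  · exact absurd heq.symm (pairRep_ne_of_two_mul_eq hxS hB₁ h₂ h₁ hhalf₂ hhalf₁)
  · simp only [pairRep, if_neg h₁, if_neg h₂, if_neg hhalf₁, if_neg hhalf₂] at heq
    rw [← Finset.sdiff_sdiff_eq_self hB₁A, heq, Finset.sdiff_sdiff_eq_self hB₂A]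

lemma card_sumDivisors_le (hpos : ∀ a ∈ A, 0 < a) (hx : x ∈ A) (hx2 : 2 * x < A.sum id)
    (hxS : ∀ d, d ∣ A.sum id → 2 * (d + x) ≠ A.sum id) :
    #(sumDivisors A) ≤ 2 ^ (#A - 1) := by
  have hmaps : Set.MapsTo (fun B => (pairRep A x B).erase x) (sumDivisors A)
      (A.erase x).powerset := fun B hB =>
    mem_powerset.2 (erase_subset_erase x (pairRep_subset hx (mem_sumDivisors.1 hB).1))
  have hinj : Set.InjOn (fun B => (pairRep A x B).erase x) (sumDivisors A) :=
    (erase_injOn' x).comp (pairRep_injOn hpos hx hx2 hxS) fun _ _ => mem_pairRep hx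
  calc #(sumDivisors A) ≤ #(A.erase x).powerset := card_le_card_of_injOn _ hmaps hinj
    _ = 2 ^ (#A - 1) := by rw [card_powerset, card_erase_of_mem hx]

lemma exists_four_lt_of_four_le_card (h4 : 4 ≤ #A) :
    ∃ a b c e, a ∈ A ∧ b ∈ A ∧ c ∈ A ∧ a < b ∧ b < c ∧ c < e ∧ a + b + c + e ≤ A.sum id := by
  obtain ⟨s, hsA, hs⟩ := exists_subset_card_eq h4
  set f := s.orderEmbOfFin hs
  have hsum : s.sum id = f 0 + f 1 + f 2 + f 3 := by
    rw [← image_orderEmbOfFin_univ s hs, sum_image f.injective.injOn, Fin.sum_univ_four]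
    rfl
  refine ⟨f 0, f 1, f 2, f 3, hsA (s.orderEmbOfFin_mem hs 0), hsA (s.orderEmbOfFin_mem hs 1),
    hsA (s.orderEmbOfFin_mem hs 2), f.strictMono (by decide), f.strictMono (by decide),
    f.strictMono (by decide), hsum ▸ sum_le_sum_of_subset hsA⟩

/-- If `x` fails, `S / 2 - x` divides `S` and is below `S / 2`. For `a < b < c` these are three
distinct such divisors, hence at most `S / 3`, `S / 4` and `S / 5`, and then `a + b + c + e > S`. -/
lemma exists_mem_forall_dvd_two_mul_add_ne (hpos : ∀ a ∈ A, 0 < a) (h4 : 4 ≤ #A) :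
    ∃ x ∈ A, 2 * x < A.sum id ∧ ∀ d, d ∣ A.sum id → 2 * (d + x) ≠ A.sum id := by
  obtain ⟨a, b, c, e, ha, hb, hc, hab, hbc, hce, hS⟩ := exists_four_lt_of_four_le_card h4
  have ha0 := hpos a ha
  by_contra! hbad
  obtain ⟨da, hda, hda2⟩ := hbad a ha (by omega)
  obtain ⟨db, hdb, hdb2⟩ := hbad b hb (by omega)
  obtain ⟨dc, hdc, hdc2⟩ := hbad c hc (by omega)
  have := mul_add_one_le_of_dvd hda (m := 2) (by omega)
  have := mul_add_one_le_of_dvd hdb (m := 3) (by omega)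
  have := mul_add_one_le_of_dvd hdc (m := 4) (by omega)
  omega

end UpperBound

section Construction

variable {I : Finset ℕ} {M : ℕ}

lemma notMem_of_sum_id_lt (hM : I.sum id < M) : M ∉ I := fun hMI =>
  (single_le_sum (f := id) (fun _ _ => Nat.zero_le _) hMI).not_gt hM

lemma sumDivisors_insert (hpos : ∀ y ∈ I, 0 < y) (hM : I.sum id < M)
    (hdvd : ∀ B ⊆ I, B.Nonempty → B.sum id ∣ M + I.sum id) :
    sumDivisors (insert M I) = insert (insert M I) (I.powerset.erase ∅) := by
  have hMI := notMem_of_sum_id_lt hM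
  have hposA : ∀ y ∈ insert M I, 0 < y := by
    simpa only [forall_mem_insert] using ⟨by omega, hpos⟩
  have hsum : (insert M I).sum id = M + I.sum id := sum_insert hMI
  ext B
  simp only [mem_sumDivisors, mem_insert, mem_erase, mem_powerset, ← nonempty_iff_ne_empty]
  constructor
  · rintro ⟨hBA, hne, hBdvd⟩
    by_cases hMB : M ∈ B
    · have hMle : M ≤ B.sum id := single_le_sum (f := id) (fun _ _ => Nat.zero_le _) hMB
      exact .inl (eq_of_mem_sumDivisors_of_lt_two_mul hposA
        (mem_sumDivisors.2 ⟨hBA, hne, hBdvd⟩) (by omega))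
    · exact .inr ⟨hne, (subset_insert_iff_of_notMem hMB).1 hBA⟩
  · rintro (rfl | ⟨hne, hBI⟩)
    · exact ⟨subset_rfl, insert_nonempty M I, dvd_rfl⟩
    · exact ⟨hBI.trans (subset_insert M I), hne, hsum ▸ hdvd B hBI hne⟩

lemma card_sumDivisors_insert (hpos : ∀ y ∈ I, 0 < y) (hM : I.sum id < M)
    (hdvd : ∀ B ⊆ I, B.Nonempty → B.sum id ∣ M + I.sum id) :
    #(sumDivisors (insert M I)) = 2 ^ #I := by
  have hAI : insert M I ∉ I.powerset.erase ∅ := fun h =>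
    notMem_of_sum_id_lt hM (mem_powerset.1 (mem_of_mem_erase h) (mem_insert_self M I))
  rw [sumDivisors_insert hpos hM hdvd, card_insert_of_notMem hAI,
    card_erase_of_mem (empty_mem_powerset I), card_powerset, Nat.sub_add_cancel Nat.one_le_two_pow]

lemma two_mul_lt_factorial {t : ℕ} (ht : 4 ≤ t) : 2 * t < t ! := by
  have : 3 ! ≤ (t - 1)! := Nat.factorial_le (by omega)
  rw [← Nat.mul_factorial_pred (by omega : t ≠ 0)]
  simp only [Nat.factorial] at this
  nlinarith

lemma exists_card_sumDivisors_eq {n : ℕ} (hn : 4 ≤ n) :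
    ∃ A : Finset ℕ, #A = n ∧ (∀ a ∈ A, 0 < a) ∧ #(sumDivisors A) = 2 ^ (n - 1) := by
  set I := Icc 1 (n - 1)
  set t := I.sum id
  have hpos : ∀ y ∈ I, 0 < y := fun y hy => by simp only [I, mem_Icc] at hy; omega
  have ht : 4 ≤ t := by
    have : ({1, 2, 3} : Finset ℕ) ⊆ I := by intro y; simp only [I, mem_insert, mem_singleton, mem_Icc]; omega
    exact le_trans (by simp) (sum_le_sum_of_subset this)
  have hM : t < (t)! - t := by have := two_mul_lt_factorial ht; omega
  have hdvd : ∀ B ⊆ I, B.Nonempty → B.sum id ∣ (t)! - t + t := fun B hBI hne => by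
    rw [Nat.sub_add_cancel (Nat.self_le_factorial t)]
    exact Nat.dvd_factorial (sum_pos (fun i hi => hpos i (hBI hi)) hne) (sum_le_sum_of_subset hBI)
  have hI : #I = n - 1 := by simp only [I, Nat.card_Icc]; omega
  refine ⟨insert ((t)! - t) I, ?_, ?_, ?_⟩
  · rw [card_insert_of_notMem (notMem_of_sum_id_lt hM), hI]; omega
  · simpa only [forall_mem_insert] using ⟨by omega, hpos⟩
  · rw [card_sumDivisors_insert hpos hM hdvd, hI]

end Construction

/-- For `n ≥ 4`, every set of `n` positive integers has at most `2 ^ (n - 1)` divisors, and this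
bound is attained, so the maximum number of divisors equals `2 ^ (n - 1)`. -/
theorem stmt_9 (n : ℕ) (hn : 4 ≤ n) :
    (∀ A : Finset ℕ, A.card = n → (∀ a ∈ A, 0 < a) →
      (A.powerset.filter (fun B => B.Nonempty ∧ B.sum id ∣ A.sum id)).card ≤ 2 ^ (n - 1)) ∧
    (∃ A : Finset ℕ, A.card = n ∧ (∀ a ∈ A, 0 < a) ∧
      (A.powerset.filter (fun B => B.Nonempty ∧ B.sum id ∣ A.sum id)).card = 2 ^ (n - 1)) := by
  refine ⟨fun A hcard hpos => ?_, exists_card_sumDivisors_eq hn⟩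
  obtain ⟨x, hx, hx2, hxS⟩ := exists_mem_forall_dvd_two_mul_add_ne hpos (hcard ▸ hn)
  exact hcard ▸ card_sumDivisors_le hpos hx hx2 hxS
end

section
/- Let A be a set of four positive integers. Then A has exactly 8 divisors if and only if A is an anti-pencil or A = {a, 2a, 3a, 6a} for some positive integer a. -/
/-!
Write `A = {a, b, c, d}` with `a < b < c < d` and `σ = a + b + c + d`. A proper subset whose sum
exceeds `σ / 2` cannot divide `σ`, so the only candidates for divisors are `A`, the nonempty subsets
of `{a, b, c}` (together: the divisors of an anti-pencil with maximum `d`), `{d}` and `{a, d}`.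
With eight divisors, `{a, d}` is impossible: it forces `b + c = a + d`, which excludes too many
other candidates. If `{d}` is not a divisor either, all eight remaining candidates are divisors and
`A` is an anti-pencil. If `{d}` is a divisor then `a + b + c` is `d` or `2 d`; the second case
fails by counting, and in the first the divisibilities forced for `{a, c}`, `{c}` and `{a, b}` give
`A = {a, 2a, 3a, 6a}`. Conversely, `{a, 2a, 3a, 6a}` is a scaled copy of `{1, 2, 3, 6}`, whose
divisors are counted directly.
-/

/-- `B` is a divisor of `A`: a nonempty subset of `A` whose sum divides the sum of `A`. -/
def IsDivisor (A B : Finset ℕ) : Prop :=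
  B ⊆ A ∧ B.Nonempty ∧ B.sum id ∣ A.sum id

/-- `A` is an anti-pencil: its divisors are precisely the nonempty subsets of `A \ {max A}`
together with `A` itself. -/
def IsAntiPencil (A : Finset ℕ) : Prop :=
  ∃ M ∈ A, (∀ x ∈ A, x ≤ M) ∧
    ∀ B : Finset ℕ, IsDivisor A B ↔ ((B.Nonempty ∧ B ⊆ A.erase M) ∨ B = A)

open Finset

theorem Finset.exists_lt_lt_lt_eq_of_card_eq_four {α : Type*} [LinearOrder α] {A : Finset α}
    (h : A.card = 4) : ∃ a b c d, a < b ∧ b < c ∧ c < d ∧ A = {a, b, c, d} := by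
  have hA := A.image_orderEmbOfFin_univ h
  generalize A.orderEmbOfFin h = f at hA
  subst hA
  refine ⟨f 0, f 1, f 2, f 3, by simp, by simp, by simp, ?_⟩
  ext
  simp [Fin.exists_fin_succ, eq_comm]

theorem Finset.eq_or_eq_of_subset_triple {α : Type*} [DecidableEq α] {x y z : α} {B : Finset α}
    (h : B ⊆ {x, y, z}) :
    B = ∅ ∨ B = {x} ∨ B = {y} ∨ B = {z} ∨ B = {x, y} ∨ B = {x, z} ∨ B = {y, z} ∨
      B = {x, y, z} := by
  rw [← mem_powerset] at h
  simp only [powerset_insert, union_assoc, mem_union, mem_powerset, subset_singleton_iff, mem_image,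
    exists_eq_or_imp, insert_empty_eq, ↓existsAndEq, true_and] at h
  rcases h with (rfl | rfl) | (rfl | rfl) | ⟨s, (rfl | rfl) | rfl | rfl, rfl⟩ <;> simp

theorem Finset.card_le_length_of_subset_toFinset {α : Type*} [DecidableEq α] {D : Finset α}
    {L : List α} (h : D ⊆ L.toFinset) : D.card ≤ L.length :=
  (card_le_card h).trans L.toFinset_card_le

theorem Finset.mem_of_subset_toFinset_of_length_le {α : Type*} [DecidableEq α] {D : Finset α}
    {L : List α} {x : α} (h : D ⊆ L.toFinset) (hL : L.length ≤ D.card) (hx : x ∈ L) : x ∈ D := by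
  rw [eq_of_subset_of_card_le h (L.toFinset_card_le.trans hL)]
  exact List.mem_toFinset.2 hx

theorem Nat.exists_lt_eq_mul_of_dvd {x y n : ℕ} (h : x ∣ y) (hy : y < n * x) :
    ∃ k < n, y = k * x := by
  obtain ⟨k, rfl⟩ := h
  rw [mul_comm n] at hy
  exact ⟨k, Nat.lt_of_mul_lt_mul_left hy, mul_comm x k⟩

def subsetDivisors (A : Finset ℕ) : Finset (Finset ℕ) :=
  A.powerset.filter fun B => B.Nonempty ∧ B.sum id ∣ A.sum id

section SubsetDivisors

variable {A B : Finset ℕ}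

theorem mem_subsetDivisors : B ∈ subsetDivisors A ↔ IsDivisor A B := by
  simp [subsetDivisors, IsDivisor]

theorem mem_subsetDivisors_of_subset (hBA : B ⊆ A) (hB : B.Nonempty) :
    B ∈ subsetDivisors A ↔ B.sum id ∣ A.sum id := by
  simp [mem_subsetDivisors, IsDivisor, hBA, hB]

theorem singleton_mem_subsetDivisors {x : ℕ} (hx : x ∈ A) :
    {x} ∈ subsetDivisors A ↔ x ∣ A.sum id := by
  rw [mem_subsetDivisors_of_subset (singleton_subset_iff.2 hx) (singleton_nonempty x),
    sum_singleton, id]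

theorem pair_mem_subsetDivisors {x y : ℕ} (hx : x ∈ A) (hy : y ∈ A) (hxy : x ≠ y) :
    {x, y} ∈ subsetDivisors A ↔ x + y ∣ A.sum id := by
  rw [mem_subsetDivisors_of_subset (insert_subset hx (singleton_subset_iff.2 hy))
    (insert_nonempty _ _), sum_pair hxy]
  rfl

theorem triple_mem_subsetDivisors {x y z : ℕ} (hx : x ∈ A) (hy : y ∈ A) (hz : z ∈ A)
    (hxy : x ≠ y) (hxz : x ≠ z) (hyz : y ≠ z) :
    {x, y, z} ∈ subsetDivisors A ↔ x + y + z ∣ A.sum id := by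
  rw [mem_subsetDivisors_of_subset (insert_subset hx (insert_subset hy
    (singleton_subset_iff.2 hz))) (insert_nonempty _ _), sum_insert (by simp [hxy, hxz]),
    sum_pair hyz, add_assoc]
  rfl

theorem two_mul_sum_le_of_mem_subsetDivisors (hpos : ∀ x ∈ A, 0 < x)
    (hB : B ∈ subsetDivisors A) (hBA : B ≠ A) : 2 * B.sum id ≤ A.sum id := by
  obtain ⟨hsub, -, k, hk⟩ := mem_subsetDivisors.1 hB
  obtain ⟨x, hxA, hxB⟩ := exists_of_ssubset (ssubset_of_subset_of_ne hsub hBA)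
  have hlt : B.sum id < A.sum id :=
    sum_lt_sum_of_subset hsub hxA hxB (hpos x hxA) fun _ _ _ => Nat.zero_le _
  have hk2 : 2 ≤ k := by
    by_contra! h
    interval_cases k <;> omega
  rw [hk, mul_comm 2]
  exact Nat.mul_le_mul_left _ hk2

theorem card_subsetDivisors_image_mul {a : ℕ} (ha : 0 < a) (A : Finset ℕ) :
    (subsetDivisors (A.image (a * ·))).card = (subsetDivisors A).card := by
  have hinj : Function.Injective (a * ·) := mul_right_injective₀ ha.ne'
  have hsum (B : Finset ℕ) : (B.image (a * ·)).sum id = a * B.sum id := by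
    rw [sum_image fun x _ y _ h => hinj h, mul_sum]
    rfl
  rw [subsetDivisors, powerset_image, filter_image, card_image_of_injective _ (image_injective hinj)]
  congr 1
  refine filter_congr fun B _ => ?_
  simp only [image_nonempty, hsum, Nat.mul_dvd_mul_iff_left ha]

theorem card_subsetDivisors_one_two_three_six_mul {a : ℕ} (ha : 0 < a) :
    (subsetDivisors {a, 2 * a, 3 * a, 6 * a}).card = 8 := by
  have hA : ({a, 2 * a, 3 * a, 6 * a} : Finset ℕ) = ({1, 2, 3, 6} : Finset ℕ).image (a * ·) := by
    simp [image_insert, mul_comm]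
  rw [hA, card_subsetDivisors_image_mul ha]
  decide

end SubsetDivisors

def antiPencilDivisors (A : Finset ℕ) (M : ℕ) : Finset (Finset ℕ) :=
  insert A ((A.erase M).powerset.erase ∅)

section AntiPencil

variable {A B : Finset ℕ} {M : ℕ}

theorem mem_antiPencilDivisors :
    B ∈ antiPencilDivisors A M ↔ (B.Nonempty ∧ B ⊆ A.erase M) ∨ B = A := by
  simp [antiPencilDivisors, nonempty_iff_ne_empty, or_comm]

theorem card_antiPencilDivisors (hM : M ∈ A) :
    (antiPencilDivisors A M).card = 2 ^ (A.card - 1) := by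
  have hA : A ∉ (A.erase M).powerset.erase ∅ := fun h =>
    notMem_erase M A (mem_powerset.1 (mem_of_mem_erase h) hM)
  rw [antiPencilDivisors, card_insert_of_notMem hA, card_erase_of_mem (empty_mem_powerset _),
    card_powerset, card_erase_of_mem hM]
  exact Nat.sub_add_cancel Nat.one_le_two_pow

theorem isAntiPencil_iff : IsAntiPencil A ↔
    ∃ M ∈ A, (∀ x ∈ A, x ≤ M) ∧ subsetDivisors A = antiPencilDivisors A M := by
  simp only [IsAntiPencil, Finset.ext_iff, mem_subsetDivisors, mem_antiPencilDivisors]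

theorem IsAntiPencil.card_subsetDivisors (h : IsAntiPencil A) :
    (subsetDivisors A).card = 2 ^ (A.card - 1) := by
  obtain ⟨M, hM, -, hD⟩ := isAntiPencil_iff.1 h
  rw [hD, card_antiPencilDivisors hM]

theorem isAntiPencil_of_subset (hM : M ∈ A) (hmax : ∀ x ∈ A, x ≤ M)
    (hsub : subsetDivisors A ⊆ antiPencilDivisors A M)
    (hcard : 2 ^ (A.card - 1) ≤ (subsetDivisors A).card) : IsAntiPencil A :=
  isAntiPencil_iff.2 ⟨M, hM, hmax, eq_of_subset_of_card_le hsub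
    (by rwa [card_antiPencilDivisors hM])⟩

end AntiPencil

section FourElements

variable {a b c d : ℕ}

theorem sum_id_four (hab : a < b) (hbc : b < c) (hcd : c < d) :
    ({a, b, c, d} : Finset ℕ).sum id = a + b + c + d := by
  rw [sum_insert (by simp; omega), sum_insert (by simp; omega), sum_pair (by omega)]
  simp only [id, add_assoc]

theorem eq_singleton_or_eq_pair_or_mem_antiPencilDivisors (h0 : 0 < a) (hab : a < b)
    (hbc : b < c) (hcd : c < d) {B : Finset ℕ} (hB : B ∈ subsetDivisors {a, b, c, d}) :
    B = {d} ∨ B = {a, d} ∨ B ∈ antiPencilDivisors {a, b, c, d} d := by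
  obtain ⟨hBA, hne, -⟩ := mem_subsetDivisors.1 hB
  by_cases hBeq : B = {a, b, c, d}
  · exact Or.inr (Or.inr (mem_antiPencilDivisors.2 (Or.inr hBeq)))
  have hhalf := two_mul_sum_le_of_mem_subsetDivisors (by simp; omega) hB hBeq
  rw [sum_id_four hab hbc hcd] at hhalf
  by_cases hd : d ∈ B
  · -- any `x ∈ {b, c}` in `B` besides `d` would push the sum of `B` past half the total
    have hmem : ∀ x ∈ B, x = a ∨ x = d := by
      intro x hx
      have hxA := hBA hx
      simp only [mem_insert, mem_singleton] at hxA
      by_contra! hx'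
      have : x + d ≤ B.sum id := by
        rw [← id_eq x, ← id_eq d, ← sum_pair hx'.2]
        exact sum_le_sum_of_subset (insert_subset hx (singleton_subset_iff.2 hd))
      omega
    by_cases ha : a ∈ B
    · exact Or.inr (Or.inl (Subset.antisymm (fun x hx => by simpa using hmem x hx)
        (insert_subset ha (singleton_subset_iff.2 hd))))
    · exact Or.inl (eq_singleton_iff_unique_mem.2
        ⟨hd, fun x hx => (hmem x hx).resolve_left fun h => ha (h ▸ hx)⟩)
  · exact Or.inr (Or.inr (mem_antiPencilDivisors.2 (Or.inl
      ⟨hne, fun x hx => mem_erase.2 ⟨ne_of_mem_of_not_mem hx hd, hBA hx⟩⟩)))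

theorem eq_of_mem_antiPencilDivisors_four (hab : a < b) (hbc : b < c) (hcd : c < d)
    {B : Finset ℕ} (hB : B ∈ antiPencilDivisors {a, b, c, d} d) :
    B = {a, b, c, d} ∨ B = {a} ∨ B = {b} ∨ B = {c} ∨ B = {a, b} ∨ B = {a, c} ∨ B = {b, c} ∨
      B = {a, b, c} := by
  have herase : ({a, b, c, d} : Finset ℕ).erase d = {a, b, c} := by
    ext
    simp only [mem_erase, mem_insert, mem_singleton]
    omega
  rcases mem_antiPencilDivisors.1 hB with ⟨hne, hsub⟩ | h
  · rw [herase] at hsub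
    exact Or.inr ((eq_or_eq_of_subset_triple hsub).resolve_left hne.ne_empty)
  · exact Or.inl h

theorem eq_of_mem_subsetDivisors_four (h0 : 0 < a) (hab : a < b) (hbc : b < c) (hcd : c < d)
    {B : Finset ℕ} (hB : B ∈ subsetDivisors {a, b, c, d}) :
    B = {d} ∨ B = {a, d} ∨ B = {a, b, c, d} ∨ B = {a} ∨ B = {b} ∨ B = {c} ∨ B = {a, b} ∨
      B = {a, c} ∨ B = {b, c} ∨ B = {a, b, c} :=
  (eq_singleton_or_eq_pair_or_mem_antiPencilDivisors h0 hab hbc hcd hB).imp_right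
    (Or.imp_right (eq_of_mem_antiPencilDivisors_four hab hbc hcd))

end FourElements

section EightDivisors

variable {a b c d : ℕ}

theorem pair_min_max_not_mem_subsetDivisors (h0 : 0 < a) (hab : a < b) (hbc : b < c)
    (hcd : c < d) (h8 : (subsetDivisors {a, b, c, d}).card = 8) :
    {a, d} ∉ subsetDivisors {a, b, c, d} := by
  set D := subsetDivisors {a, b, c, d}
  have hσ := sum_id_four hab hbc hcd
  intro had
  have hbc_ad : b + c = a + d := by
    obtain ⟨k, hk, hσk⟩ := Nat.exists_lt_eq_mul_of_dvd
      ((pair_mem_subsetDivisors (by simp) (by simp) (by omega)).1 had) (by omega : _ < 3 * _)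
    interval_cases k <;> omega
  have habc : {a, b, c} ∉ D := by
    rw [triple_mem_subsetDivisors (by simp) (by simp) (by simp) (by omega) (by omega) (by omega)]
    exact Nat.not_dvd_of_lt_of_lt_mul_succ (k := 1) (by omega) (by omega)
  by_cases hc : {c} ∈ D
  · have hcb : c = 2 * b := by
      obtain ⟨k, hk, hσk⟩ := Nat.exists_lt_eq_mul_of_dvd
        ((singleton_mem_subsetDivisors (by simp)).1 hc) (by omega : _ < 4 * _)
      interval_cases k <;> omega
    have hac : {a, c} ∉ D := by
      rw [pair_mem_subsetDivisors (by simp) (by simp) (by omega)]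
      exact Nat.not_dvd_of_lt_of_lt_mul_succ (k := 2) (by omega) (by omega)
    have hd : {d} ∉ D := by
      rw [singleton_mem_subsetDivisors (by simp)]
      exact Nat.not_dvd_of_lt_of_lt_mul_succ (k := 2) (by omega) (by omega)
    have hsub : D ⊆ [{a}, {b}, {c}, {a, b}, {b, c}, {a, d}, {a, b, c, d}].toFinset := by
      intro B hB
      rcases eq_of_mem_subsetDivisors_four h0 hab hbc hcd hB with
        rfl | rfl | rfl | rfl | rfl | rfl | rfl | rfl | rfl | rfl <;> first | contradiction | simp
    have : D.card ≤ 7 := card_le_length_of_subset_toFinset hsub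
    omega
  · have hsub : D ⊆ [{a}, {b}, {a, b}, {a, c}, {b, c}, {d}, {a, d}, {a, b, c, d}].toFinset := by
      intro B hB
      rcases eq_of_mem_subsetDivisors_four h0 hab hbc hcd hB with
        rfl | rfl | rfl | rfl | rfl | rfl | rfl | rfl | rfl | rfl <;> first | contradiction | simp
    have hac := mem_of_subset_toFinset_of_length_le hsub h8.ge (x := {a, c}) (by simp)
    have hd := mem_of_subset_toFinset_of_length_le hsub h8.ge (x := {d}) (by simp)
    obtain ⟨k, hk, hσk⟩ := Nat.exists_lt_eq_mul_of_dvd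
      ((pair_mem_subsetDivisors (by simp) (by simp) (by omega)).1 hac) (by omega : _ < 4 * _)
    obtain ⟨l, hl, hσl⟩ := Nat.exists_lt_eq_mul_of_dvd
      ((singleton_mem_subsetDivisors (by simp)).1 hd) (by omega : _ < 4 * _)
    interval_cases k <;> interval_cases l <;> omega

theorem eq_of_sum_eq_max (h0 : 0 < a) (hab : a < b) (hbc : b < c) (hcd : c < d)
    (h8 : (subsetDivisors {a, b, c, d}).card = 8) (had : {a, d} ∉ subsetDivisors {a, b, c, d})
    (hsum : a + b + c = d) : b = 2 * a ∧ c = 3 * a ∧ d = 6 * a := by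
  set D := subsetDivisors {a, b, c, d}
  have hσ := sum_id_four hab hbc hcd
  have hbc' : {b, c} ∉ D := by
    rw [pair_mem_subsetDivisors (by simp) (by simp) (by omega)]
    exact Nat.not_dvd_of_lt_of_lt_mul_succ (k := 2) (by omega) (by omega)
  have hsub : D ⊆ [{a}, {b}, {c}, {a, b}, {a, c}, {a, b, c}, {d}, {a, b, c, d}].toFinset := by
    intro B hB
    rcases eq_of_mem_subsetDivisors_four h0 hab hbc hcd hB with
      rfl | rfl | rfl | rfl | rfl | rfl | rfl | rfl | rfl | rfl <;> first | contradiction | simp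
  have hac := mem_of_subset_toFinset_of_length_le hsub h8.ge (x := {a, c}) (by simp)
  have hc := mem_of_subset_toFinset_of_length_le hsub h8.ge (x := {c}) (by simp)
  have hab' := mem_of_subset_toFinset_of_length_le hsub h8.ge (x := {a, b}) (by simp)
  have hb : 2 * b = a + c := by
    obtain ⟨k, hk, hσk⟩ := Nat.exists_lt_eq_mul_of_dvd
      ((pair_mem_subsetDivisors (by simp) (by simp) (by omega)).1 hac) (by omega : _ < 4 * _)
    interval_cases k <;> omega
  obtain ⟨k, hk, hσk⟩ := Nat.exists_lt_eq_mul_of_dvd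
    ((singleton_mem_subsetDivisors (by simp)).1 hc) (by omega : _ < 6 * _)
  obtain ⟨l, hl, hσl⟩ := Nat.exists_lt_eq_mul_of_dvd
    ((pair_mem_subsetDivisors (by simp) (by simp) (by omega)).1 hab') (by omega : _ < 6 * _)
  interval_cases k <;> interval_cases l <;> omega

theorem sum_ne_two_mul_max (h0 : 0 < a) (hab : a < b) (hbc : b < c) (hcd : c < d)
    (h8 : (subsetDivisors {a, b, c, d}).card = 8) (had : {a, d} ∉ subsetDivisors {a, b, c, d}) :
    a + b + c ≠ 2 * d := by
  set D := subsetDivisors {a, b, c, d}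
  have hσ := sum_id_four hab hbc hcd
  intro hsum
  have habc : {a, b, c} ∉ D := by
    rw [triple_mem_subsetDivisors (by simp) (by simp) (by simp) (by omega) (by omega) (by omega)]
    exact Nat.not_dvd_of_lt_of_lt_mul_succ (k := 1) (by omega) (by omega)
  have hsub : D ⊆ [{a}, {b}, {c}, {a, b}, {a, c}, {b, c}, {d}, {a, b, c, d}].toFinset := by
    intro B hB
    rcases eq_of_mem_subsetDivisors_four h0 hab hbc hcd hB with
      rfl | rfl | rfl | rfl | rfl | rfl | rfl | rfl | rfl | rfl <;> first | contradiction | simp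
  have hab' := mem_of_subset_toFinset_of_length_le hsub h8.ge (x := {a, b}) (by simp)
  obtain ⟨k, hk, hσk⟩ := Nat.exists_lt_eq_mul_of_dvd
    ((pair_mem_subsetDivisors (by simp) (by simp) (by omega)).1 hab') (by omega : _ < 3 * _)
  interval_cases k <;> omega

theorem eq_of_singleton_max_mem_subsetDivisors (h0 : 0 < a) (hab : a < b) (hbc : b < c)
    (hcd : c < d) (h8 : (subsetDivisors {a, b, c, d}).card = 8)
    (hd : {d} ∈ subsetDivisors {a, b, c, d}) : b = 2 * a ∧ c = 3 * a ∧ d = 6 * a := by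
  have had := pair_min_max_not_mem_subsetDivisors h0 hab hbc hcd h8
  have hσ := sum_id_four hab hbc hcd
  obtain ⟨k, hk, hσk⟩ := Nat.exists_lt_eq_mul_of_dvd
    ((singleton_mem_subsetDivisors (by simp)).1 hd) (by omega : _ < 4 * _)
  interval_cases k
  · omega
  · omega
  · exact eq_of_sum_eq_max h0 hab hbc hcd h8 had (by omega)
  · exact absurd (by omega) (sum_ne_two_mul_max h0 hab hbc hcd h8 had)

end EightDivisors

/-- A set of four positive integers has exactly 8 divisors if and only if it is an anti-pencil
or equals `{a, 2a, 3a, 6a}` for some positive integer `a`. -/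
theorem stmt_15 (A : Finset ℕ) (hcard : A.card = 4) (hpos : ∀ a ∈ A, 0 < a) :
    (A.powerset.filter (fun B => B.Nonempty ∧ B.sum id ∣ A.sum id)).card = 8 ↔
      (IsAntiPencil A ∨ ∃ a : ℕ, 0 < a ∧ A = {a, 2 * a, 3 * a, 6 * a}) := by
  change (subsetDivisors A).card = 8 ↔ _
  constructor
  · intro h8
    obtain ⟨a, b, c, d, hab, hbc, hcd, rfl⟩ := exists_lt_lt_lt_eq_of_card_eq_four hcard
    have h0 : 0 < a := hpos a (by simp)
    by_cases hd : {d} ∈ subsetDivisors {a, b, c, d}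
    · obtain ⟨rfl, rfl, rfl⟩ := eq_of_singleton_max_mem_subsetDivisors h0 hab hbc hcd h8 hd
      exact Or.inr ⟨a, h0, rfl⟩
    · have had := pair_min_max_not_mem_subsetDivisors h0 hab hbc hcd h8
      refine Or.inl (isAntiPencil_of_subset (M := d) (by simp) (by simp; omega) (fun B hB => ?_)
        (by rw [hcard, h8]; rfl))
      exact ((eq_singleton_or_eq_pair_or_mem_antiPencilDivisors h0 hab hbc hcd hB).resolve_left
        (ne_of_mem_of_not_mem hB hd)).resolve_left (ne_of_mem_of_not_mem hB had)
  · rintro (hA | ⟨a, ha, rfl⟩)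
    · rw [hA.card_subsetDivisors, hcard]
      rfl
    · exact card_subsetDivisors_one_two_three_six_mul ha
end
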